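/- Let n ≥ 2 and let A be an n×n row-stochastic strictly diagonally dominant positive real matrix. If ((c_min(A) − 1)/(n−1)²)^{1/V} ≥ 2^{n·H_max(A)/σ_min(A)}, where V = c_min(A)/(c_min(A) − 1), then the channel capacity equals the closed-form expression: C(A) = U(A). -/

import Mathlib

open Matrix Finset Real

noncomputable def rowEntropy {n : ℕ} (A : Matrix (Fin n) (Fin n) ℝ) (i : Fin n) : ℝ :=
  -∑ k, A i k * Real.logb 2 (A i k)

noncomputable def Kvec {n : ℕ} (A : Matrix (Fin n) (Fin n) ℝ) (j : Fin n) : ℝ :=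
  ∑ i, A⁻¹ j i * rowEntropy A i

noncomputable def Kmax {n : ℕ} (A : Matrix (Fin n) (Fin n) ℝ) : ℝ := ⨆ j, Kvec A j

noncomputable def Kmin {n : ℕ} (A : Matrix (Fin n) (Fin n) ℝ) : ℝ := ⨅ j, Kvec A j

def IsPmf {n : ℕ} (p : Fin n → ℝ) : Prop := (∀ i, 0 ≤ p i) ∧ ∑ i, p i = 1

noncomputable def mutualInfo {n : ℕ} (A : Matrix (Fin n) (Fin n) ℝ) (p : Fin n → ℝ) : ℝ :=
  -(∑ j, Aᵀ.mulVec p j * Real.logb 2 (Aᵀ.mulVec p j))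
    + ∑ i, ∑ j, p i * A i j * Real.logb 2 (A i j)

noncomputable def capacity {n : ℕ} (A : Matrix (Fin n) (Fin n) ℝ) : ℝ :=
  sSup {x : ℝ | ∃ p : Fin n → ℝ, IsPmf p ∧ mutualInfo A p = x}

noncomputable def qStar {n : ℕ} (A : Matrix (Fin n) (Fin n) ℝ) (j : Fin n) : ℝ :=
  (2 : ℝ) ^ (-Kvec A j) / ∑ i, (2 : ℝ) ^ (-Kvec A i)

noncomputable def pStar {n : ℕ} (A : Matrix (Fin n) (Fin n) ℝ) : Fin n → ℝ :=
  (A⁻¹)ᵀ.mulVec (qStar A)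

noncomputable def Ubound {n : ℕ} (A : Matrix (Fin n) (Fin n) ℝ) : ℝ :=
  -(∑ j, qStar A j * Real.logb 2 (qStar A j))
    + ∑ i, ∑ j, pStar A i * A i j * Real.logb 2 (A i j)

noncomputable def cmin {n : ℕ} (A : Matrix (Fin n) (Fin n) ℝ) : ℝ :=
  ⨅ i, A i i / ∑ j ∈ Finset.univ.erase i, |A i j|

noncomputable def Hmax {n : ℕ} (A : Matrix (Fin n) (Fin n) ℝ) : ℝ := ⨆ i, rowEntropy A i

noncomputable def sigmaMin {n : ℕ} (A : Matrix (Fin n) (Fin n) ℝ) : ℝ :=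
  Real.sqrt (⨅ i, (Matrix.isHermitian_iff_isSymm.mpr (Matrix.isSymm_transpose_mul_self A)).eigenvalues i)

def RowStochastic {n : ℕ} (A : Matrix (Fin n) (Fin n) ℝ) : Prop :=
  (∀ i j, 0 ≤ A i j) ∧ ∀ i, ∑ j, A i j = 1

def SDDPos {n : ℕ} (A : Matrix (Fin n) (Fin n) ℝ) : Prop :=
  (∀ i j, 0 < A i j) ∧ ∀ i, ∑ j ∈ Finset.univ.erase i, A i j < A i i

/-! The mutual information splits as `log₂ Σ_j 2^{-K_j}` minus the relative entropy of the output
law `Aᵀ p` with respect to `q*` (because `A K = H`), so by Gibbs' inequality `C(A) ≤ U(A)`, with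
equality at `p*` as soon as `p*` is a probability vector; `Σ p* = 1` holds automatically.

For `p* ≥ 0`, write `p*_i = Σ_j (A⁻¹)_{ji} q*_j`. In the `i`-th column of the inverse of a
strictly diagonally dominant matrix the diagonal entry is positive and dominates every other
entry by the factor `c_min`, so it suffices that `(n - 1) q*_j ≤ c_min q*_k` for all `j, k`.
Since `q*_j / q*_k = 2^{K_k - K_j}` and `σ_min ‖K‖ ≤ ‖A K‖ = ‖H‖ ≤ √n H_max`, this ratio is at
most `2^{n H_max / σ_min}`, which the hypothesis bounds by `c_min / (n - 1)`. -/

namespace Matrix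

variable {ι : Type*} [Fintype ι]

theorem posSemidef_transpose_mul_self (A : Matrix ι ι ℝ) : (Aᵀ * A).PosSemidef := by
  simpa [conjTranspose_eq_transpose_of_trivial] using posSemidef_conjTranspose_mul_self A

variable [DecidableEq ι]

open scoped MatrixOrder in
theorem IsHermitian.mul_dotProduct_self_le {M : Matrix ι ι ℝ} (hM : M.IsHermitian) {c : ℝ}
    (hc : ∀ i, c ≤ hM.eigenvalues i) (x : ι → ℝ) : c * (x ⬝ᵥ x) ≤ x ⬝ᵥ (M *ᵥ x) := by
  have hle : algebraMap ℝ _ c ≤ M := by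
    rw [algebraMap_le_iff_le_spectrum (p := IsSelfAdjoint) hM,
      hM.spectrum_real_eq_range_eigenvalues]
    rintro _ ⟨i, rfl⟩
    exact hc i
  have := (le_iff.mp hle).dotProduct_mulVec_nonneg x
  rwa [Algebra.algebraMap_eq_smul_one, sub_mulVec, smul_mulVec, one_mulVec, star_trivial,
    dotProduct_sub, dotProduct_smul, smul_eq_mul, sub_nonneg] at this

theorem mul_dotProduct_self_le_of_le_eigenvalues (A : Matrix ι ι ℝ) (h : (Aᵀ * A).IsHermitian)
    {c : ℝ} (hc : ∀ i, c ≤ h.eigenvalues i) (x : ι → ℝ) :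
    c * (x ⬝ᵥ x) ≤ (A *ᵥ x) ⬝ᵥ (A *ᵥ x) := by
  calc c * (x ⬝ᵥ x) ≤ x ⬝ᵥ ((Aᵀ * A) *ᵥ x) := h.mul_dotProduct_self_le hc x
    _ = (A *ᵥ x) ⬝ᵥ (A *ᵥ x) := by rw [← mulVec_mulVec, dotProduct_mulVec, vecMul_transpose]

theorem eigenvalues_transpose_mul_self_pos {A : Matrix ι ι ℝ} (hA : A.det ≠ 0)
    (h : (Aᵀ * A).IsHermitian) (i : ι) : 0 < h.eigenvalues i :=
  ((posSemidef_transpose_mul_self A).posDef_iff_det_ne_zero.mpr (by simp [hA])).eigenvalues_pos i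

theorem sq_sub_le_two_mul_dotProduct_self (x : ι → ℝ) (j k : ι) :
    (x j - x k) ^ 2 ≤ 2 * (x ⬝ᵥ x) := by
  rcases eq_or_ne j k with rfl | hjk
  · rw [sub_self, sq, zero_mul]
    exact mul_nonneg zero_le_two (sum_nonneg fun i _ => mul_self_nonneg (x i))
  · have hpair : x j ^ 2 + x k ^ 2 ≤ x ⬝ᵥ x := by
      have := sum_le_sum_of_subset_of_nonneg (subset_univ {j, k})
        fun i _ _ => mul_self_nonneg (x i)
      rwa [sum_pair hjk, ← sq, ← sq] at this
    nlinarith [sq_nonneg (x j + x k)]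

theorem abs_mulVec_apply_sub_le (A : Matrix ι ι ℝ) {x : ι → ℝ} {m : ℝ} (hm : ∀ k, |x k| ≤ m)
    (j : ι) : |(A *ᵥ x) j - A j j * x j| ≤ (∑ k ∈ univ.erase j, |A j k|) * m := by
  have hsplit : (A *ᵥ x) j - A j j * x j = ∑ k ∈ univ.erase j, A j k * x k := by
    rw [mulVec, dotProduct, ← add_sum_erase _ _ (mem_univ j), add_sub_cancel_left]
  rw [hsplit, sum_mul]
  refine (abs_sum_le_sum_abs _ _).trans (sum_le_sum fun k _ => ?_)
  rw [abs_mul]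
  exact mul_le_mul_of_nonneg_left (hm k) (abs_nonneg _)

theorem diag_pos_of_sum_abs_lt {A : Matrix ι ι ℝ} {j : ι}
    (hdom : ∑ k ∈ univ.erase j, |A j k| < A j j) : 0 < A j j :=
  (sum_nonneg fun _ _ => abs_nonneg _).trans_lt hdom

theorem abs_le_abs_of_mulVec_eq_single {A : Matrix ι ι ℝ}
    (hdom : ∀ j, ∑ k ∈ univ.erase j, |A j k| < A j j) {x : ι → ℝ} {i : ι}
    (hx : A *ᵥ x = Pi.single i 1) (j : ι) : |x j| ≤ |x i| := by
  obtain ⟨j₀, -, hj₀⟩ := exists_max_image univ (fun k => |x k|) ⟨i, mem_univ i⟩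
  suffices j₀ = i from this ▸ hj₀ j (mem_univ j)
  by_contra hne
  have hrow := A.abs_mulVec_apply_sub_le (fun k => hj₀ k (mem_univ k)) j₀
  rw [hx, Pi.single_eq_of_ne hne, zero_sub, abs_neg, abs_mul,
    abs_of_pos (diag_pos_of_sum_abs_lt (hdom j₀))] at hrow
  -- row `j₀` forces `A j₀ j₀ * |x j₀| ≤ R * |x j₀|` with `R < A j₀ j₀`, so `x = 0`
  have hzero : ∀ k, x k = 0 := fun k => abs_nonpos_iff.mp
    ((hj₀ k (mem_univ k)).trans (by nlinarith [hdom j₀, abs_nonneg (x j₀)]))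
  have hi := congrFun hx i
  simp [mulVec, dotProduct, hzero] at hi

theorem pos_of_mulVec_eq_single {A : Matrix ι ι ℝ}
    (hdom : ∀ j, ∑ k ∈ univ.erase j, |A j k| < A j j) {x : ι → ℝ} {i : ι}
    (hx : A *ᵥ x = Pi.single i 1) : 0 < x i := by
  have hrow := A.abs_mulVec_apply_sub_le (abs_le_abs_of_mulVec_eq_single hdom hx) i
  rw [hx, Pi.single_eq_same] at hrow
  by_contra! hxi
  rw [abs_of_nonpos hxi] at hrow
  nlinarith [le_abs_self (1 - A i i * x i), hdom i]

theorem diag_mul_abs_le_of_mulVec_eq_single {A : Matrix ι ι ℝ}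
    (hdom : ∀ j, ∑ k ∈ univ.erase j, |A j k| < A j j) {x : ι → ℝ} {i : ι}
    (hx : A *ᵥ x = Pi.single i 1) {j : ι} (hj : j ≠ i) :
    A j j * |x j| ≤ (∑ k ∈ univ.erase j, |A j k|) * x i := by
  have hrow := A.abs_mulVec_apply_sub_le (abs_le_abs_of_mulVec_eq_single hdom hx) j
  rwa [hx, Pi.single_eq_of_ne hj, zero_sub, abs_neg, abs_mul,
    abs_of_pos (diag_pos_of_sum_abs_lt (hdom j)),
    abs_of_pos (pos_of_mulVec_eq_single hdom hx)] at hrow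

theorem dotProduct_nonneg_of_abs_mul_le {x q : ι → ℝ} {i : ι} {c : ℝ} (hxi : 0 ≤ x i)
    (hx : ∀ j ≠ i, c * |x j| ≤ x i) (hq : ∀ j, 0 ≤ q j)
    (hqi : ∀ j, ((Fintype.card ι : ℝ) - 1) * q j ≤ c * q i) : 0 ≤ x ⬝ᵥ q := by
  set s := univ.erase i
  have hcard : (#s : ℝ) = Fintype.card ι - 1 := by
    rw [card_erase_of_mem (mem_univ i), card_univ,
      Nat.cast_sub (Fintype.card_pos_iff.mpr ⟨i⟩), Nat.cast_one]
  have hterm : ∀ j ∈ s, (#s : ℝ) * (|x j| * q j) ≤ x i * q i := fun j hj => by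
    calc (#s : ℝ) * (|x j| * q j) = |x j| * ((Fintype.card ι - 1) * q j) := by rw [hcard]; ring
      _ ≤ |x j| * (c * q i) := mul_le_mul_of_nonneg_left (hqi j) (abs_nonneg _)
      _ = (c * |x j|) * q i := by ring
      _ ≤ x i * q i := mul_le_mul_of_nonneg_right (hx j (ne_of_mem_erase hj)) (hq i)
  have hlower : x i * q i - ∑ j ∈ s, |x j| * q j ≤ x ⬝ᵥ q := by
    rw [dotProduct, ← add_sum_erase _ _ (mem_univ i), sub_eq_add_neg, ← sum_neg_distrib]
    gcongr with j
    rw [← abs_of_nonneg (hq j), ← abs_mul, abs_of_nonneg (hq j)]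
    exact neg_abs_le _
  rcases s.eq_empty_or_nonempty with hs | hs
  · rw [hs, sum_empty, sub_zero] at hlower
    exact (mul_nonneg hxi (hq i)).trans hlower
  · have hsum : (#s : ℝ) * ∑ j ∈ s, |x j| * q j ≤ #s * (x i * q i) := by
      rw [mul_sum]
      exact (sum_le_sum hterm).trans_eq (by rw [sum_const, nsmul_eq_mul])
    have := le_of_mul_le_mul_left hsum (by exact_mod_cast hs.card_pos)
    linarith

end Matrix

theorem Real.sum_mul_logb_le_sum_mul_logb {ι : Type*} [Fintype ι] {q r : ι → ℝ}
    (hq : ∀ j, 0 ≤ q j) (hr : ∀ j, 0 < r j) (hsum : ∑ j, r j ≤ ∑ j, q j) :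
    ∑ j, q j * Real.logb 2 (r j) ≤ ∑ j, q j * Real.logb 2 (q j) := by
  have hterm : ∀ j, q j * Real.log (r j) ≤ q j * Real.log (q j) + (r j - q j) := fun j => by
    rcases (hq j).eq_or_lt with hj | hj
    · rw [← hj]; simpa using (hr j).le
    · have := mul_le_mul_of_nonneg_left (Real.log_le_sub_one_of_pos (div_pos (hr j) hj)) hj.le
      rw [Real.log_div (hr j).ne' hj.ne', mul_sub_one, mul_div_cancel₀ _ hj.ne'] at this
      linarith
  have hlog : ∑ j, q j * Real.log (r j) ≤ ∑ j, q j * Real.log (q j) := by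
    have := sum_le_sum fun j (_ : j ∈ univ) => hterm j
    rw [sum_add_distrib, sum_sub_distrib] at this
    linarith
  simp only [Real.logb, mul_div_assoc', ← sum_div]
  exact div_le_div_of_nonneg_right hlog (Real.log_pos one_lt_two).le

section Channel

variable {n : ℕ} {A : Matrix (Fin n) (Fin n) ℝ}

theorem SDDPos.sum_abs_lt (hA : SDDPos A) (j : Fin n) :
    ∑ k ∈ univ.erase j, |A j k| < A j j := by
  rw [sum_congr rfl fun k _ => abs_of_pos (hA.1 j k)]
  exact hA.2 j

theorem SDDPos.det_ne_zero (hA : SDDPos A) : A.det ≠ 0 :=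
  det_ne_zero_of_sum_row_lt_diag fun k => by
    simpa [Real.norm_eq_abs, abs_of_pos (hA.1 k k)] using hA.sum_abs_lt k

theorem cmin_nonneg (hA : ∀ j, 0 ≤ A j j) : 0 ≤ cmin A :=
  Real.iInf_nonneg fun j => div_nonneg (hA j) (sum_nonneg fun _ _ => abs_nonneg _)

theorem cmin_mul_le {j : Fin n} (hj : 0 ≤ A j j) :
    cmin A * ∑ k ∈ univ.erase j, |A j k| ≤ A j j := by
  rcases (sum_nonneg fun k (_ : k ∈ univ.erase j) => abs_nonneg (A j k)).eq_or_lt with h | h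
  · rwa [← h, mul_zero]
  · exact (le_div_iff₀ h).mp (ciInf_le (Set.finite_range _).bddBelow j)

theorem one_lt_cmin (hn : 2 ≤ n) (hA : SDDPos A) : 1 < cmin A := by
  have : Nonempty (Fin n) := ⟨⟨0, by omega⟩⟩
  obtain ⟨j, hj⟩ := exists_eq_ciInf_of_finite (f := fun i => A i i / ∑ k ∈ univ.erase i, |A i k|)
  have hR : 0 < ∑ k ∈ univ.erase j, |A j k| := by
    obtain ⟨k, hk⟩ := Fintype.exists_ne_of_one_lt_card (by simp; omega) j
    exact sum_pos' (fun k _ => abs_nonneg _)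
      ⟨k, mem_erase.mpr ⟨hk, mem_univ k⟩, abs_pos.mpr (hA.1 j k).ne'⟩
  rw [cmin, ← hj, one_lt_div hR]
  exact hA.sum_abs_lt j

theorem RowStochastic.le_one (hst : RowStochastic A) (i j : Fin n) : A i j ≤ 1 := by
  rw [← hst.2 i]
  exact single_le_sum (fun k _ => hst.1 i k) (mem_univ j)

theorem rowEntropy_nonneg (hst : RowStochastic A) (i : Fin n) : 0 ≤ rowEntropy A i := by
  rw [rowEntropy, neg_nonneg]
  exact sum_nonpos fun k _ => mul_nonpos_of_nonneg_of_nonpos (hst.1 i k)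
    (Real.logb_nonpos one_lt_two (hst.1 i k) (hst.le_one i k))

theorem rowEntropy_le_Hmax (A : Matrix (Fin n) (Fin n) ℝ) (i : Fin n) :
    rowEntropy A i ≤ Hmax A :=
  le_ciSup (Set.finite_range _).bddAbove i

theorem Hmax_nonneg (hn : 0 < n) (hst : RowStochastic A) : 0 ≤ Hmax A :=
  (rowEntropy_nonneg hst ⟨0, hn⟩).trans (rowEntropy_le_Hmax A _)

theorem mulVec_Kvec (hdet : A.det ≠ 0) : A *ᵥ Kvec A = rowEntropy A := by
  rw [show Kvec A = A⁻¹ *ᵥ rowEntropy A from rfl, mulVec_mulVec,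
    mul_nonsing_inv A hdet.isUnit, one_mulVec]

theorem sq_sigmaMin_mul_le (A : Matrix (Fin n) (Fin n) ℝ) (x : Fin n → ℝ) :
    sigmaMin A ^ 2 * (x ⬝ᵥ x) ≤ (A *ᵥ x) ⬝ᵥ (A *ᵥ x) := by
  rw [sigmaMin, Real.sq_sqrt (Real.iInf_nonneg (posSemidef_transpose_mul_self A).eigenvalues_nonneg)]
  exact A.mul_dotProduct_self_le_of_le_eigenvalues _
    (fun i => ciInf_le (Set.finite_range _).bddBelow i) x

theorem sigmaMin_pos (hn : 0 < n) (hdet : A.det ≠ 0) : 0 < sigmaMin A := by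
  have : Nonempty (Fin n) := ⟨⟨0, hn⟩⟩
  obtain ⟨i, hi⟩ := exists_eq_ciInf_of_finite
    (f := (isHermitian_iff_isSymm.mpr (isSymm_transpose_mul_self A)).eigenvalues)
  rw [sigmaMin, ← hi]
  exact Real.sqrt_pos.mpr (eigenvalues_transpose_mul_self_pos hdet _ i)

theorem Kvec_sub_le (hn : 2 ≤ n) (hst : RowStochastic A) (hdet : A.det ≠ 0) (j k : Fin n) :
    Kvec A j - Kvec A k ≤ n * Hmax A / sigmaMin A := by
  have hσ := sigmaMin_pos (by omega) hdet
  have hH := Hmax_nonneg (by omega) hst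
  have hn2 : (2 : ℝ) ≤ n := by exact_mod_cast hn
  have hnorm : sigmaMin A ^ 2 * (Kvec A ⬝ᵥ Kvec A) ≤ n * Hmax A ^ 2 :=
    calc sigmaMin A ^ 2 * (Kvec A ⬝ᵥ Kvec A) ≤ rowEntropy A ⬝ᵥ rowEntropy A := by
          simpa only [mulVec_Kvec hdet] using sq_sigmaMin_mul_le A (Kvec A)
      _ = ∑ i, rowEntropy A i ^ 2 := by simp only [dotProduct, sq]
      _ ≤ ∑ _i : Fin n, Hmax A ^ 2 := sum_le_sum fun i _ =>
          pow_le_pow_left₀ (rowEntropy_nonneg hst i) (rowEntropy_le_Hmax A i) 2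
      _ = n * Hmax A ^ 2 := by simp
  have hsq : (Kvec A j - Kvec A k) ^ 2 ≤ (n * Hmax A / sigmaMin A) ^ 2 := by
    rw [div_pow, le_div_iff₀ (by positivity)]
    nlinarith [mul_le_mul_of_nonneg_right (sq_sub_le_two_mul_dotProduct_self (Kvec A) j k)
      (sq_nonneg (sigmaMin A)), mul_nonneg (sub_nonneg.mpr hn2) (sq_nonneg (Hmax A))]
  exact (abs_le_of_sq_le_sq' hsq (by positivity)).2

theorem le_div_of_le_rpow_one_div {a c m : ℝ} (hc : 1 < c) (hm : 1 ≤ m) (ha : 1 ≤ a)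
    (h : a ≤ ((c - 1) / m ^ 2) ^ ((1 : ℝ) / (c / (c - 1)))) : a ≤ c / m := by
  set b := (c - 1) / m ^ 2
  have he0 : 0 < (c - 1) / c := div_pos (by linarith) (by linarith)
  have he1 : (c - 1) / c ≤ 1 := (div_le_one (by linarith)).mpr (by linarith)
  rw [one_div_div] at h
  have hb : 1 ≤ b := by
    by_contra! hb
    exact (ha.trans h).not_gt (Real.rpow_lt_one (by positivity) hb he0)
  calc a ≤ b ^ ((c - 1) / c) := h
    _ ≤ b ^ (1 : ℝ) := Real.rpow_le_rpow_of_exponent_le hb he1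
    _ = b := Real.rpow_one b
    _ ≤ c / m := by
      rw [div_le_div_iff₀ (by positivity) (by positivity)]
      nlinarith [mul_nonneg (mul_nonneg (by linarith : 0 ≤ c) (by linarith : 0 ≤ m))
        (sub_nonneg.mpr hm)]

theorem sum_rpow_neg_Kvec_pos (hn : 0 < n) : 0 < ∑ i, (2 : ℝ) ^ (-Kvec A i) :=
  sum_pos (fun _ _ => Real.rpow_pos_of_pos two_pos _) ⟨⟨0, hn⟩, mem_univ _⟩

theorem qStar_pos (hn : 0 < n) (j : Fin n) : 0 < qStar A j :=
  div_pos (Real.rpow_pos_of_pos two_pos _) (sum_rpow_neg_Kvec_pos hn)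

theorem sum_qStar (hn : 0 < n) : ∑ j, qStar A j = 1 := by
  simp only [qStar]
  rw [← sum_div, div_self (sum_rpow_neg_Kvec_pos hn).ne']

theorem qStar_eq_rpow_mul (j k : Fin n) : qStar A j = 2 ^ (Kvec A k - Kvec A j) * qStar A k := by
  rw [qStar, qStar, ← mul_div_assoc, ← Real.rpow_add two_pos]
  congr 2
  ring

theorem sub_one_mul_qStar_le (hn : 2 ≤ n) (hst : RowStochastic A) (hA : SDDPos A)
    (hcond : (2 : ℝ) ^ ((n : ℝ) * Hmax A / sigmaMin A) ≤
        ((cmin A - 1) / ((n : ℝ) - 1) ^ 2) ^ ((1 : ℝ) / (cmin A / (cmin A - 1))))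
    (j k : Fin n) : ((n : ℝ) - 1) * qStar A j ≤ cmin A * qStar A k := by
  have hK := Kvec_sub_le hn hst hA.det_ne_zero
  have hn1 : (1 : ℝ) ≤ n - 1 := by
    have : (2 : ℝ) ≤ n := by exact_mod_cast hn
    linarith
  have hratio : (2 : ℝ) ^ ((n : ℝ) * Hmax A / sigmaMin A) ≤ cmin A / (n - 1) :=
    le_div_of_le_rpow_one_div (one_lt_cmin hn hA) hn1
      (Real.one_le_rpow one_le_two (sub_self (Kvec A j) ▸ hK j j)) hcond
  have hq := (qStar_pos (A := A) (by omega) k).le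
  calc ((n : ℝ) - 1) * qStar A j = (n - 1) * (2 ^ (Kvec A k - Kvec A j) * qStar A k) := by
        rw [qStar_eq_rpow_mul j k]
    _ ≤ (n - 1) * (2 ^ ((n : ℝ) * Hmax A / sigmaMin A) * qStar A k) := by
        gcongr
        · exact one_le_two
        · exact hK k j
    _ ≤ (n - 1) * (cmin A / (n - 1) * qStar A k) := by gcongr
    _ = cmin A * qStar A k := by field_simp

theorem pStar_apply (i : Fin n) : pStar A i = (A⁻¹ *ᵥ Pi.single i 1) ⬝ᵥ qStar A := by
  rw [mulVec_single_one]
  rfl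

theorem pStar_nonneg (hn : 0 < n) (hA : SDDPos A)
    (hq : ∀ j k, ((n : ℝ) - 1) * qStar A j ≤ cmin A * qStar A k) (i : Fin n) :
    0 ≤ pStar A i := by
  have hdom := hA.sum_abs_lt
  set x := A⁻¹ *ᵥ Pi.single i 1
  have hx : A *ᵥ x = Pi.single i 1 := by
    rw [mulVec_mulVec, mul_nonsing_inv A hA.det_ne_zero.isUnit, one_mulVec]
  have hxi := pos_of_mulVec_eq_single hdom hx
  have hc := cmin_nonneg fun j => (hA.1 j j).le
  rw [pStar_apply]
  refine dotProduct_nonneg_of_abs_mul_le hxi.le (fun j hj => ?_) (fun j => (qStar_pos hn j).le)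
    (by simpa only [Fintype.card_fin] using fun j => hq j i)
  have hdiag := diag_mul_abs_le_of_mulVec_eq_single hdom hx hj
  have hR := cmin_mul_le (hA.1 j j).le
  refine le_of_mul_le_mul_left ?_ (hA.1 j j)
  calc A j j * (cmin A * |x j|) = cmin A * (A j j * |x j|) := by ring
    _ ≤ cmin A * ((∑ k ∈ univ.erase j, |A j k|) * x i) := by gcongr
    _ = (cmin A * ∑ k ∈ univ.erase j, |A j k|) * x i := by ring
    _ ≤ A j j * x i := by gcongr

theorem sum_transpose_mulVec (hst : RowStochastic A) (p : Fin n → ℝ) :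
    ∑ j, (Aᵀ *ᵥ p) j = ∑ i, p i := by
  simp only [mulVec, dotProduct, transpose_apply]
  rw [sum_comm]
  exact sum_congr rfl fun i _ => by rw [← sum_mul, hst.2 i, one_mul]

theorem transpose_mulVec_nonneg (hst : RowStochastic A) {p : Fin n → ℝ} (hp : ∀ i, 0 ≤ p i)
    (j : Fin n) : 0 ≤ (Aᵀ *ᵥ p) j := by
  simp only [mulVec, dotProduct, transpose_apply]
  exact sum_nonneg fun i _ => mul_nonneg (hst.1 i j) (hp i)

theorem mutualInfo_eq (hn : 0 < n) (hst : RowStochastic A) (hdet : A.det ≠ 0)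
    {p : Fin n → ℝ} (hp : ∑ i, p i = 1) :
    mutualInfo A p = Real.logb 2 (∑ i, (2 : ℝ) ^ (-Kvec A i))
      + ∑ j, (Aᵀ *ᵥ p) j * Real.logb 2 (qStar A j)
      - ∑ j, (Aᵀ *ᵥ p) j * Real.logb 2 ((Aᵀ *ᵥ p) j) := by
  set S := ∑ i, (2 : ℝ) ^ (-Kvec A i)
  have hnoise : ∑ i, ∑ j, p i * A i j * Real.logb 2 (A i j) = -((Aᵀ *ᵥ p) ⬝ᵥ Kvec A) :=
    calc ∑ i, ∑ j, p i * A i j * Real.logb 2 (A i j) = -(p ⬝ᵥ rowEntropy A) := by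
          simp only [rowEntropy, dotProduct, mul_neg, sum_neg_distrib, neg_neg, mul_sum, mul_assoc]
      _ = -((Aᵀ *ᵥ p) ⬝ᵥ Kvec A) := by
          rw [← mulVec_Kvec hdet, dotProduct_mulVec, mulVec_transpose]
  have hcross : ∑ j, (Aᵀ *ᵥ p) j * Real.logb 2 (qStar A j)
      = -((Aᵀ *ᵥ p) ⬝ᵥ Kvec A) - Real.logb 2 S := by
    have hlog : ∀ j, Real.logb 2 (qStar A j) = -Kvec A j - Real.logb 2 S := fun j => by
      rw [qStar, Real.logb_div (Real.rpow_pos_of_pos two_pos _).ne' (sum_rpow_neg_Kvec_pos hn).ne',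
        Real.logb_rpow two_pos (by norm_num)]
    simp only [hlog, mul_sub, mul_neg, sum_sub_distrib, sum_neg_distrib, ← sum_mul,
      sum_transpose_mulVec hst, hp, one_mul, dotProduct]
  rw [mutualInfo, hnoise, hcross]
  ring

theorem mutualInfo_le (hn : 0 < n) (hst : RowStochastic A) (hdet : A.det ≠ 0)
    {p : Fin n → ℝ} (hp : IsPmf p) :
    mutualInfo A p ≤ Real.logb 2 (∑ i, (2 : ℝ) ^ (-Kvec A i)) := by
  have := Real.sum_mul_logb_le_sum_mul_logb (transpose_mulVec_nonneg hst hp.1) (qStar_pos (A := A) hn)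
    (by rw [sum_qStar hn, sum_transpose_mulVec hst, hp.2])
  rw [mutualInfo_eq hn hst hdet hp.2]
  linarith

theorem transpose_mulVec_pStar (hdet : A.det ≠ 0) : Aᵀ *ᵥ pStar A = qStar A := by
  rw [pStar, mulVec_mulVec, ← transpose_mul, nonsing_inv_mul A hdet.isUnit, transpose_one,
    one_mulVec]

theorem sum_pStar (hn : 0 < n) (hst : RowStochastic A) (hdet : A.det ≠ 0) :
    ∑ i, pStar A i = 1 := by
  rw [← sum_transpose_mulVec hst, transpose_mulVec_pStar hdet, sum_qStar hn]

theorem mutualInfo_pStar (hn : 0 < n) (hst : RowStochastic A) (hdet : A.det ≠ 0) :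
    mutualInfo A (pStar A) = Real.logb 2 (∑ i, (2 : ℝ) ^ (-Kvec A i)) := by
  rw [mutualInfo_eq hn hst hdet (sum_pStar hn hst hdet), transpose_mulVec_pStar hdet]
  ring

theorem Ubound_eq_mutualInfo_pStar (hdet : A.det ≠ 0) : Ubound A = mutualInfo A (pStar A) := by
  rw [mutualInfo, Ubound, transpose_mulVec_pStar hdet]

theorem capacity_eq_Ubound_of_pStar_nonneg (hn : 0 < n) (hst : RowStochastic A)
    (hdet : A.det ≠ 0) (hp : ∀ i, 0 ≤ pStar A i) : capacity A = Ubound A := by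
  rw [capacity, Ubound_eq_mutualInfo_pStar hdet]
  refine IsGreatest.csSup_eq ⟨⟨pStar A, ⟨hp, sum_pStar hn hst hdet⟩, rfl⟩, ?_⟩
  rintro _ ⟨p, hp, rfl⟩
  rw [mutualInfo_pStar hn hst hdet]
  exact mutualInfo_le hn hst hdet hp

end Channel

theorem capacity_eq_Ubound_of_singular_cond {n : ℕ} (hn : 2 ≤ n)
    (A : Matrix (Fin n) (Fin n) ℝ) (hst : RowStochastic A) (hA : SDDPos A)
    (hcond : (2 : ℝ) ^ ((n : ℝ) * Hmax A / sigmaMin A) ≤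
        ((cmin A - 1) / ((n : ℝ) - 1) ^ 2) ^ ((1 : ℝ) / (cmin A / (cmin A - 1)))) :
    capacity A = Ubound A :=
  capacity_eq_Ubound_of_pStar_nonneg (by omega) hst hA.det_ne_zero
    (pStar_nonneg (by omega) hA (sub_one_mul_qStar_le hn hst hA hcond))
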